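/- arXiv:1506.08030 — 3 statements merged into one kernel-verified Lean document; each statement's English description precedes it below -/
import Mathlib

section
/- For every t ≥ 1, the infimum over all timed models (p_s)_{s≥1} of the dynamic knowledge base K = ((μ, T), 𝕊) of P_{p_t}(c) equals the infimum over all models p of the static knowledge base (μ_t, 𝕊) of P_p(c). -/
open scoped ENNReal

namespace BL

variable {I A C V : Type*}

/-- A world `W` satisfies the context `κ` if it agrees with `κ` wherever it is defined. -/
def SatCtx (W : V → Bool) (κ : V → Option Bool) : Prop :=
  ∀ v b, κ v = some b → W v = b

/-- The ontology induced by the world `W` from the `V`-ontology `𝕊`. -/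
def OW (𝕊 : Finset (A × (V → Option Bool))) (W : V → Bool) : Set A :=
  {α | ∃ κ, (α, κ) ∈ 𝕊 ∧ SatCtx W κ}

/-- `i` is a model of the ontology `O`. -/
def IsOntModel (satA : I → A → Prop) (O : Set A) (i : I) : Prop :=
  ∀ α ∈ O, satA i α

/-- The ontology `O` entails the consequence `c`. -/
def Entails (satA : I → A → Prop) (satC : I → C → Prop) (O : Set A) (c : C) : Prop :=
  ∀ i : I, IsOntModel satA O i → satC i c

/-- A probabilistic interpretation `p` (a finitely supported PMF on pairs of an
interpretation and a world) is a model of the knowledge base `(PB, 𝕊)`. -/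
def IsKBModel (satA : I → A → Prop) (PB : PMF (V → Bool))
    (𝕊 : Finset (A × (V → Option Bool))) (p : PMF (I × (V → Bool))) : Prop :=
  p.support.Finite ∧
    (∀ iW ∈ p.support, IsOntModel satA (OW 𝕊 iW.2) iW.1) ∧
    ∀ W : V → Bool, ∑' i : I, p (i, W) = PB W

/-- `P_p(c)`: the probability of the consequence `c` w.r.t. `p`. -/
noncomputable def Pp (satC : I → C → Prop) (p : PMF (I × (V → Bool))) (c : C) : ℝ≥0∞ :=
  ∑' iW : I × (V → Bool), {x : I × (V → Bool) | satC x.1 c}.indicator (⇑p) iW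

/-- `P_K(c)`: the infimum of `P_p(c)` over all models `p` of the knowledge base. -/
noncomputable def PK (satA : I → A → Prop) (satC : I → C → Prop) (PB : PMF (V → Bool))
    (𝕊 : Finset (A × (V → Option Bool))) (c : C) : ℝ≥0∞ :=
  sInf {x : ℝ≥0∞ | ∃ p : PMF (I × (V → Bool)), IsKBModel satA PB 𝕊 p ∧ x = Pp satC p c}

/-- The `t`-th marginal of the DBN `(μ, T)` (0-indexed: `marg μ T 0 = μ_1 = μ`,
and `marg μ T n = μ_{n+1}` with `μ_{t+1}(W') = Σ_W μ_t(W)·T(W)(W')`). -/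
noncomputable def marg (μ : PMF (V → Bool)) (T : (V → Bool) → PMF (V → Bool)) :
    ℕ → PMF (V → Bool)
  | 0 => μ
  | n + 1 => (marg μ T n).bind T

/-- A timed probabilistic interpretation `(p_t)_{t ≥ 1}` is a model of the dynamic
knowledge base `((μ, T), 𝕊)` if for every `t ≥ 1`, `p t` is a model of `(μ_t, 𝕊)`. -/
def IsTimedModel (satA : I → A → Prop) (μ : PMF (V → Bool))
    (T : (V → Bool) → PMF (V → Bool)) (𝕊 : Finset (A × (V → Option Bool)))
    (p : ℕ → PMF (I × (V → Bool))) : Prop :=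
  ∀ t : ℕ, 1 ≤ t → IsKBModel satA (marg μ T (t - 1)) 𝕊 (p t)

/-- `P_K(c[t])`: the infimum of `P_{p_t}(c)` over all timed models of the dynamic KB. -/
noncomputable def PKtime (satA : I → A → Prop) (satC : I → C → Prop)
    (μ : PMF (V → Bool)) (T : (V → Bool) → PMF (V → Bool))
    (𝕊 : Finset (A × (V → Option Bool))) (c : C) (t : ℕ) : ℝ≥0∞ :=
  sInf {x : ℝ≥0∞ | ∃ p : ℕ → PMF (I × (V → Bool)),
    IsTimedModel satA μ T 𝕊 p ∧ x = Pp satC (p t) c}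

/-!
Projecting a timed model to time `t` gives a model of the static knowledge base `(μ_t, 𝕊)`.
Conversely, choosing for every world `W` a model `f W` of `O_W` turns any distribution `P_B`
on worlds into a model of `(P_B, 𝕊)` (the image of `P_B` under `W ↦ (f W, W)`), so a static
model at time `t` extends to a timed model by filling every other time this way. Both infima
therefore range over the same set of values.
-/

theorem tsum_apply_fst_eq_map_snd {α β : Type*} (p : PMF (α × β)) (b : β) :
    ∑' a, p (a, b) = p.map Prod.snd b := by
  rw [PMF.map_apply, ENNReal.tsum_prod']
  exact tsum_congr fun a => by simp

theorem isKBModel_map_graph [Finite V] (satA : I → A → Prop)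
    (𝕊 : Finset (A × (V → Option Bool))) (PB : PMF (V → Bool)) (f : (V → Bool) → I)
    (hf : ∀ W, IsOntModel satA (OW 𝕊 W) (f W)) :
    IsKBModel satA PB 𝕊 (PB.map fun W => (f W, W)) := by
  refine ⟨(Set.finite_range fun W => (f W, W)).subset ?_, ?_, fun W => ?_⟩
  · rw [PMF.support_map]
    exact Set.image_subset_range _ _
  · rintro _ hiW
    rw [PMF.support_map] at hiW
    obtain ⟨W, -, rfl⟩ := hiW
    exact hf W
  · rw [tsum_apply_fst_eq_map_snd, PMF.map_comp]
    exact DFunLike.congr_fun (PMF.map_id PB) W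

theorem exists_isKBModel [Finite V] (satA : I → A → Prop)
    (𝕊 : Finset (A × (V → Option Bool)))
    (hmod : ∀ W : V → Bool, ∃ i : I, IsOntModel satA (OW 𝕊 W) i) (PB : PMF (V → Bool)) :
    ∃ p, IsKBModel satA PB 𝕊 p := by
  choose f hf using hmod
  exact ⟨_, isKBModel_map_graph satA 𝕊 PB f hf⟩

theorem exists_isTimedModel_apply_eq [Finite V] (satA : I → A → Prop)
    (μ : PMF (V → Bool)) (T : (V → Bool) → PMF (V → Bool))
    (𝕊 : Finset (A × (V → Option Bool)))
    (hmod : ∀ W : V → Bool, ∃ i : I, IsOntModel satA (OW 𝕊 W) i) {t : ℕ}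
    {q : PMF (I × (V → Bool))} (hq : IsKBModel satA (marg μ T (t - 1)) 𝕊 q) :
    ∃ p, IsTimedModel satA μ T 𝕊 p ∧ p t = q := by
  choose P hP using exists_isKBModel satA 𝕊 hmod
  refine ⟨Function.update (fun s => P (marg μ T (s - 1))) t q, fun s _ => ?_,
    Function.update_self ..⟩
  rcases eq_or_ne s t with rfl | hs
  · simpa using hq
  · simpa [hs] using hP _

/-- for every `t ≥ 1`, the infimum over timed models of the dynamic KB of
`P_{p_t}(c)` equals the infimum over models of the static KB `(μ_t, 𝕊)` of `P_p(c)`. -/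
theorem timed_entailment_eq_static [Fintype V]
    (satA : I → A → Prop) (satC : I → C → Prop)
    (μ : PMF (V → Bool)) (T : (V → Bool) → PMF (V → Bool))
    (𝕊 : Finset (A × (V → Option Bool))) (c : C) (t : ℕ) (ht : 1 ≤ t)
    (hmod : ∀ W : V → Bool, ∃ i : I, IsOntModel satA (OW 𝕊 W) i) :
    PKtime satA satC μ T 𝕊 c t
      = sInf {x : ℝ≥0∞ | ∃ q : PMF (I × (V → Bool)),
          IsKBModel satA (marg μ T (t - 1)) 𝕊 q ∧ x = Pp satC q c} := by
  refine congrArg sInf (Set.ext fun x => ⟨?_, ?_⟩)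
  · rintro ⟨p, hp, rfl⟩
    exact ⟨p t, hp t ht, rfl⟩
  · rintro ⟨q, hq, rfl⟩
    obtain ⟨p, hp, hpt⟩ := exists_isTimedModel_apply_eq satA μ T 𝕊 hmod hq
    exact ⟨p, hp, hpt ▸ rfl⟩

end BL
end

section
/- The function t ↦ P_K(c[1:t]) is monotone nondecreasing in t and bounded above by 1; consequently the limit P_K(c[∞]) := lim_{t→∞} P_K(c[1:t]) exists. -/
open scoped ENNReal

namespace DBL

variable {I A C V : Type*}

/-- A world `W` satisfies the context `κ` if it agrees with `κ` wherever it is defined. -/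
def SatCtx (W : V → Bool) (κ : V → Option Bool) : Prop :=
  ∀ v b, κ v = some b → W v = b

/-- The ontology induced by the world `W` from the `V`-ontology `𝕊`. -/
def OW (𝕊 : Finset (A × (V → Option Bool))) (W : V → Bool) : Set A :=
  {α | ∃ κ, (α, κ) ∈ 𝕊 ∧ SatCtx W κ}

/-- `i` is a model of the ontology `O`. -/
def IsOntModel (satA : I → A → Prop) (O : Set A) (i : I) : Prop :=
  ∀ α ∈ O, satA i α

/-- The ontology `O` entails the consequence `c`. -/
def Entails (satA : I → A → Prop) (satC : I → C → Prop) (O : Set A) (c : C) : Prop :=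
  ∀ i : I, IsOntModel satA O i → satC i c

/-- The `t`-step path distribution of the Markov chain with initial distribution `μ` and
transition kernel `T`: `π_t(W) = μ(W 0) · ∏_{i < t-1} T(W i)(W (i+1))`. -/
noncomputable def pathProb {S : Type*} (μ : PMF S) (T : S → PMF S)
    (t : ℕ) (W : Fin t → S) : ℝ≥0∞ :=
  if h : 0 < t then
    μ (W ⟨0, h⟩) * ∏ i : Fin (t - 1),
      T (W ⟨(i : ℕ), by have := i.2; omega⟩) (W ⟨(i : ℕ) + 1, by have := i.2; omega⟩)
  else 1

/-- A `t`-step probabilistic interpretation `q` (a finitely supported PMF on pairs of a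
tuple of interpretations and a path of worlds) is a `t`-step model of `((μ, T), 𝕊)`. -/
def IsStepModel (satA : I → A → Prop) (μ : PMF (V → Bool))
    (T : (V → Bool) → PMF (V → Bool)) (𝕊 : Finset (A × (V → Option Bool))) (t : ℕ)
    (q : PMF ((Fin t → I) × (Fin t → (V → Bool)))) : Prop :=
  q.support.Finite ∧
    (∀ iw ∈ q.support, ∀ s : Fin t, IsOntModel satA (OW 𝕊 (iw.2 s)) (iw.1 s)) ∧
    ∀ W : Fin t → (V → Bool), ∑' i : Fin t → I, q (i, W) = pathProb μ T t W

/-- `P_q(c[1:t])`: the `q`-probability that `c` is observed at some step `s < t`. -/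
noncomputable def Pqt (satC : I → C → Prop) (t : ℕ)
    (q : PMF ((Fin t → I) × (Fin t → (V → Bool)))) (c : C) : ℝ≥0∞ :=
  ∑' iw : (Fin t → I) × (Fin t → (V → Bool)),
    {x : (Fin t → I) × (Fin t → (V → Bool)) | ∃ s : Fin t, satC (x.1 s) c}.indicator (⇑q) iw

/-- `P_K(c[1:t])`: the infimum of `P_q(c[1:t])` over all `t`-step models `q` of the KB. -/
noncomputable def PKbound (satA : I → A → Prop) (satC : I → C → Prop)
    (μ : PMF (V → Bool)) (T : (V → Bool) → PMF (V → Bool))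
    (𝕊 : Finset (A × (V → Option Bool))) (c : C) (t : ℕ) : ℝ≥0∞ :=
  sInf {x : ℝ≥0∞ | ∃ q : PMF ((Fin t → I) × (Fin t → (V → Bool))),
    IsStepModel satA μ T 𝕊 t q ∧ x = Pqt satC t q c}


section Aux

variable {S : Type*}

lemma pathProb_succ_eq (μ : PMF S) (T : S → PMF S) (n : ℕ) (W : Fin (n+1) → S) :
    pathProb μ T (n+1) W = μ (W 0) * ∏ i : Fin n, T (W i.castSucc) (W i.succ) := by
  rw [pathProb, dif_pos (Nat.succ_pos n)]
  rfl

/-- The `snoc` equivalence used to peel off the last step of a path. -/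
def snocEquiv (S : Type*) (n : ℕ) : (Fin n → S) × S ≃ (Fin (n+1) → S) where
  toFun x := Fin.snoc x.1 x.2
  invFun W := (Fin.init W, W (Fin.last n))
  left_inv x := by simp
  right_inv W := by simp

lemma pathProb_snoc (μ : PMF S) (T : S → PMF S) (n : ℕ) (W : Fin (n+1) → S) (s : S) :
    pathProb μ T (n+2) (Fin.snoc W s) = pathProb μ T (n+1) W * T (W (Fin.last n)) s := by
  rw [pathProb_succ_eq, pathProb_succ_eq, Fin.prod_univ_castSucc]
  have h0 : (Fin.snoc W s : Fin (n+2) → S) 0 = W 0 := by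
    show (Fin.snoc W s : Fin (n+2) → S) (Fin.castSucc 0) = W 0
    rw [Fin.snoc_castSucc]
  have h1 : ∀ i : Fin n,
      T ((Fin.snoc W s : Fin (n+2) → S) i.castSucc.castSucc)
        ((Fin.snoc W s : Fin (n+2) → S) i.castSucc.succ)
      = T (W i.castSucc) (W i.succ) := by
    intro i
    rw [Fin.snoc_castSucc, Fin.succ_castSucc, Fin.snoc_castSucc]
  have h2 : T ((Fin.snoc W s : Fin (n+2) → S) (Fin.last n).castSucc)
      ((Fin.snoc W s : Fin (n+2) → S) (Fin.last n).succ) = T (W (Fin.last n)) s := by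
    rw [Fin.snoc_castSucc, Fin.succ_last, Fin.snoc_last]
  rw [h0, h2, Finset.prod_congr rfl (fun i _ => h1 i), mul_assoc]

lemma tsum_pathProb (μ : PMF S) (T : S → PMF S) : ∀ n : ℕ,
    ∑' W : Fin (n+1) → S, pathProb μ T (n+1) W = 1 := by
  intro n
  induction n with
  | zero =>
    rw [← (Equiv.funUnique (Fin 1) S).symm.tsum_eq (fun W => pathProb μ T 1 W)]
    simp only [pathProb_succ_eq]
    simp [Equiv.funUnique]
  | succ n ih =>
    rw [← (snocEquiv S (n+1)).tsum_eq (fun W => pathProb μ T (n+2) W)]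
    simp only [snocEquiv, Equiv.coe_fn_mk]
    rw [ENNReal.tsum_prod']
    simp only [pathProb_snoc]
    calc ∑' (W : Fin (n+1) → S), ∑' (s : S), pathProb μ T (n+1) W * (T (W (Fin.last n))) s
        = ∑' (W : Fin (n+1) → S), pathProb μ T (n+1) W * ∑' (s : S), (T (W (Fin.last n))) s := by
          simp [ENNReal.tsum_mul_left]
      _ = 1 := by simp [PMF.tsum_coe, ih]

open scoped Classical in
lemma tsum_pathProb_marginal (μ : PMF S) (T : S → PMF S) (n : ℕ) :
    ∀ (t' : ℕ) (h : n + 1 ≤ t') (W : Fin (n+1) → S),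
    (∑' W' : Fin t' → S, if W = W' ∘ Fin.castLE h then pathProb μ T t' W' else 0)
      = pathProb μ T (n+1) W := by
  intro t' h
  induction t', h using Nat.le_induction with
  | base =>
    intro W
    have hc : ∀ W' : Fin (n+1) → S, W' ∘ Fin.castLE (le_refl (n+1)) = W' := fun _ => rfl
    rw [tsum_eq_single W]
    · simp [hc]
    · intro W' h'; simp only [hc]; exact if_neg (fun hc' => h' hc'.symm)
  | succ t' ht ih =>
    intro W
    rw [← (snocEquiv S t').tsum_eq]
    simp only [snocEquiv, Equiv.coe_fn_mk]
    rw [ENNReal.tsum_prod']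
    have key : ∀ (W'' : Fin t' → S) (s : S),
        (Fin.snoc W'' s : Fin (t'+1) → S) ∘ Fin.castLE (by omega : n+1 ≤ t'+1)
          = W'' ∘ Fin.castLE ht := by
      intro W'' s; funext x
      show (Fin.snoc W'' s : Fin (t'+1) → S) (Fin.castSucc (Fin.castLE ht x)) = _
      rw [Fin.snoc_castSucc]; rfl
    simp only [key]
    obtain ⟨m, rfl⟩ : ∃ m, t' = m + 1 := ⟨t' - 1, by omega⟩
    have inner : ∀ W'' : Fin (m+1) → S,
        (∑' s : S, if W = W'' ∘ Fin.castLE ht then pathProb μ T (m+2) (Fin.snoc W'' s) else 0)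
          = (if W = W'' ∘ Fin.castLE ht then pathProb μ T (m+1) W'' else 0) := by
      intro W''
      by_cases hcond : W = W'' ∘ Fin.castLE ht
      · simp only [if_pos hcond, pathProb_snoc]
        rw [ENNReal.tsum_mul_left, PMF.tsum_coe, mul_one]
      · simp [if_neg hcond]
    simp only [inner]
    exact ih W

/-- The path distribution as a PMF. -/
noncomputable def pathPMF (μ : PMF S) (T : S → PMF S) (n : ℕ) : PMF (Fin (n+1) → S) :=
  ⟨pathProb μ T (n+1), (Summable.hasSum_iff ENNReal.summable).2 (tsum_pathProb μ T n)⟩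

lemma pathPMF_apply (μ : PMF S) (T : S → PMF S) (n : ℕ) (W : Fin (n+1) → S) :
    pathPMF μ T n W = pathProb μ T (n+1) W := rfl

end Aux

/-- `t ↦ P_K(c[1:t])` is monotone nondecreasing and bounded above by `1`;
consequently the limit `P_K(c[∞]) := lim_{t→∞} P_K(c[1:t])` exists. -/
theorem time_bounded_entailment_monotone_limit [Fintype V]
    (satA : I → A → Prop) (satC : I → C → Prop)
    (μ : PMF (V → Bool)) (T : (V → Bool) → PMF (V → Bool))
    (𝕊 : Finset (A × (V → Option Bool))) (c : C)
    (hmod : ∀ W : V → Bool, ∃ i : I, IsOntModel satA (OW 𝕊 W) i) :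
    (∀ t t' : ℕ, 1 ≤ t → t ≤ t' →
        PKbound satA satC μ T 𝕊 c t ≤ PKbound satA satC μ T 𝕊 c t') ∧
    (∀ t : ℕ, 1 ≤ t → PKbound satA satC μ T 𝕊 c t ≤ 1) ∧
    ∃ L : ℝ≥0∞, Filter.Tendsto (fun t : ℕ => PKbound satA satC μ T 𝕊 c t)
      Filter.atTop (nhds L) := by
  classical
  -- Existence of a t-step model, for every t = n+1.
  have exist : ∀ n : ℕ, ∃ q : PMF ((Fin (n+1) → I) × (Fin (n+1) → (V → Bool))),
      IsStepModel satA μ T 𝕊 (n+1) q := by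
    intro n
    choose iOf hiOf using hmod
    refine ⟨(pathPMF μ T n).map (fun W => (fun s => iOf (W s), W)), ?_, ?_, ?_⟩
    · rw [PMF.support_map]
      exact Set.Finite.image _ (Set.toFinite _)
    · intro iw hiw s
      rw [PMF.support_map] at hiw
      obtain ⟨W, _, rfl⟩ := hiw
      exact hiOf (W s)
    · intro W
      have h1 : ∀ i : Fin (n+1) → I,
          ((pathPMF μ T n).map (fun W => (fun s => iOf (W s), W))) (i, W)
            = if i = (fun s => iOf (W s)) then pathProb μ T (n+1) W else 0 := by
        intro i
        rw [PMF.map_apply, tsum_eq_single W]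
        · by_cases h : i = fun s => iOf (W s) <;>
            simp [h, Prod.ext_iff, pathPMF_apply]
        · intro W' hW'
          rw [if_neg]
          intro hcontra
          exact hW' (congrArg Prod.snd hcontra).symm
      simp only [h1]
      rw [tsum_eq_single (fun s => iOf (W s)) (fun i hi => if_neg hi), if_pos rfl]
  -- boundedness
  have hbound : ∀ t : ℕ, 1 ≤ t → PKbound satA satC μ T 𝕊 c t ≤ 1 := by
    intro t ht
    obtain ⟨n, rfl⟩ : ∃ n, t = n + 1 := ⟨t - 1, by omega⟩
    obtain ⟨q, hq⟩ := exist n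
    refine le_trans (sInf_le ⟨q, hq, rfl⟩) ?_
    refine le_trans (Summable.tsum_le_tsum (fun iw => Set.indicator_le_self _ _ iw)
      ENNReal.summable ENNReal.summable) ?_
    exact le_of_eq q.tsum_coe
  -- monotonicity
  have hmono : ∀ t t' : ℕ, 1 ≤ t → t ≤ t' →
      PKbound satA satC μ T 𝕊 c t ≤ PKbound satA satC μ T 𝕊 c t' := by
    intro t t' ht htt'
    obtain ⟨n, rfl⟩ : ∃ n, t = n + 1 := ⟨t - 1, by omega⟩
    refine le_sInf ?_
    rintro x ⟨q', hq', rfl⟩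
    set e := Fin.castLE htt' with he
    set r : (Fin t' → I) × (Fin t' → (V → Bool)) →
        (Fin (n+1) → I) × (Fin (n+1) → (V → Bool)) :=
      fun a => (a.1 ∘ e, a.2 ∘ e) with hr
    have hqmod : IsStepModel satA μ T 𝕊 (n+1) (q'.map r) := by
      refine ⟨?_, ?_, ?_⟩
      · rw [PMF.support_map]
        exact Set.Finite.image _ hq'.1
      · intro iw hiw s
        rw [PMF.support_map] at hiw
        obtain ⟨a, ha, rfl⟩ := hiw
        exact hq'.2.1 a ha (e s)
      · intro W
        calc ∑' i : Fin (n+1) → I, (q'.map r) (i, W)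
            = ∑' (i : Fin (n+1) → I) (a : (Fin t' → I) × (Fin t' → (V → Bool))),
                if (i, W) = r a then q' a else 0 := by
              simp only [PMF.map_apply]
              exact tsum_congr fun i => tsum_congr fun a => by
                by_cases h : (i, W) = r a <;> simp [h]
          _ = ∑' (a : (Fin t' → I) × (Fin t' → (V → Bool))) (i : Fin (n+1) → I),
                if (i, W) = r a then q' a else 0 := ENNReal.tsum_comm
          _ = ∑' a : (Fin t' → I) × (Fin t' → (V → Bool)),
                if W = a.2 ∘ e then q' a else 0 := by
              refine tsum_congr fun a => ?_
              rw [tsum_eq_single (a.1 ∘ e)]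
              · by_cases hw : W = a.2 ∘ e <;> simp [hr, Prod.ext_iff, hw]
              · intro i hi
                rw [if_neg]
                intro hcontra
                exact hi (congrArg Prod.fst hcontra)
          _ = ∑' (i' : Fin t' → I) (W' : Fin t' → (V → Bool)),
                if W = W' ∘ e then q' (i', W') else 0 := ENNReal.tsum_prod'
          _ = ∑' (W' : Fin t' → (V → Bool)) (i' : Fin t' → I),
                if W = W' ∘ e then q' (i', W') else 0 := ENNReal.tsum_comm
          _ = ∑' W' : Fin t' → (V → Bool),
                if W = W' ∘ e then pathProb μ T t' W' else 0 := by
              refine tsum_congr fun W' => ?_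
              by_cases hw : W = W' ∘ e <;> simp [hw, hq'.2.2 W']
          _ = pathProb μ T (n+1) W := by
              rw [← tsum_pathProb_marginal μ T n t' htt' W]
              exact tsum_congr fun W' => by
                by_cases hw : W = W' ∘ Fin.castLE htt' <;> simp [he, hw]
    refine le_trans (sInf_le ⟨q'.map r, hqmod, rfl⟩) ?_
    have hsub : r ⁻¹' {x : (Fin (n+1) → I) × (Fin (n+1) → (V → Bool)) |
        ∃ s : Fin (n+1), satC (x.1 s) c} ⊆
        {x : (Fin t' → I) × (Fin t' → (V → Bool)) | ∃ s : Fin t', satC (x.1 s) c} := by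
      rintro a ⟨s, hs⟩
      exact ⟨e s, hs⟩
    calc Pqt satC (n+1) (q'.map r) c
        = (q'.map r).toOuterMeasure {x | ∃ s : Fin (n+1), satC (x.1 s) c} :=
          (PMF.toOuterMeasure_apply _ _).symm
      _ = q'.toOuterMeasure (r ⁻¹' {x | ∃ s : Fin (n+1), satC (x.1 s) c}) :=
          PMF.toOuterMeasure_map_apply _ _ _
      _ ≤ q'.toOuterMeasure {x | ∃ s : Fin t', satC (x.1 s) c} := q'.toOuterMeasure.mono hsub
      _ = Pqt satC t' q' c := PMF.toOuterMeasure_apply _ _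
  refine ⟨hmono, hbound, ⟨⨆ n : ℕ, PKbound satA satC μ T 𝕊 c (n+1), ?_⟩⟩
  have hm : Monotone (fun n : ℕ => PKbound satA satC μ T 𝕊 c (n+1)) :=
    fun a b hab => hmono (a+1) (b+1) (by omega) (by omega)
  exact (Filter.tendsto_add_atTop_iff_nat 1).1 (tendsto_atTop_iSup hm)

end DBL
end

section
/- Let φ be a context formula for c with respect to 𝕊, and let A := {W : V → Bool | W satisfies φ}. If every PMF ν on worlds that is stationary for T satisfies ν(A) > 0, then the probability of eventually observing c is 1, i.e., lim_{t→∞} P_K(c[1:t]) = 1. -/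
open scoped ENNReal

namespace DBL

variable {I A C V : Type*}

/-- A PMF `ν` on worlds is stationary for the kernel `T`. -/
def Stationary {S : Type*} (T : S → PMF S) (ν : PMF S) : Prop :=
  ∀ s' : S, ∑' s : S, ν s * T s s' = ν s'

/-! Every `t`-step model observes `c` on every path that visits `{φ}`, and some `t`-step model
exists, so `P_K(c[1:t])` lies between `1` and the probability that the chain visits `{φ}` within
`t` steps. It remains to show that the probability `h s` of never leaving `D = {¬φ}` from `s` is
zero. Since `h = T h` on `D` and `h = 0` off `D`, the set where `h` attains its maximum is
absorbing, and it lies inside `D` if that maximum is positive. Cesàro averages of the chain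
started in this set have a subsequence converging to a stationary distribution supported on it,
which then gives `{φ}` probability `0`, contrary to the hypothesis. -/

open scoped Classical
open Finset Filter Topology

theorem _root_.PMF.sum_coe {S : Type*} [Fintype S] (p : PMF S) : ∑ s, p s = 1 := by
  rw [← tsum_fintype (L := SummationFilter.unconditional _)]
  exact p.tsum_coe

theorem _root_.PMF.tsum_map_prodMk_apply {X Y : Type*} (p : PMF X) (g : X → Y) (x : X) :
    ∑' y, p.map (fun x => (g x, x)) (y, x) = p x := by
  simp only [PMF.map_apply, Prod.mk.injEq]
  rw [ENNReal.tsum_comm]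
  simp [ite_and, eq_comm (a := x)]

theorem _root_.PMF.bind_apply_fintype {S : Type*} [Fintype S] (ν : PMF S) (T : S → PMF S)
    (s' : S) : ν.bind T s' = ∑ s, ν s * T s s' := by
  rw [PMF.bind_apply, tsum_fintype]

theorem sum_fin_succ_pi {S M : Type*} [Fintype S] [AddCommMonoid M] (n : ℕ)
    (F : (Fin (n + 1) → S) → M) : ∑ W, F W = ∑ s, ∑ W : Fin n → S, F (Fin.cons s W) :=
  (Fintype.sum_equiv (Fin.consEquiv fun _ => S) _ _ fun _ => rfl).symm.trans
    (Fintype.sum_prod_type _)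

section MarkovChain

variable {S : Type*} (T : S → PMF S)

theorem pathProb_succ (ρ : PMF S) (n : ℕ) (W : Fin (n + 1) → S) :
    pathProb ρ T (n + 1) W = ρ (W 0) * ∏ i : Fin n, T (W i.castSucc) (W i.succ) := by
  simp only [pathProb, dif_pos n.succ_pos]
  rfl

theorem pathProb_cons (ρ : PMF S) (n : ℕ) (s : S) (W : Fin (n + 1) → S) :
    pathProb ρ T (n + 2) (Fin.cons s W) = ρ s * pathProb (T s) T (n + 1) W := by
  rw [pathProb_succ, pathProb_succ, Fin.prod_univ_succ]
  simp only [Fin.cons_zero, Fin.castSucc_zero, Fin.cons_succ, ← Fin.succ_castSucc]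

variable [Fintype S]

/-- The probability that the states at times `0, …, n` of the chain started at `s` all
satisfy `d`. -/
noncomputable def stayProb (d : S → Prop) : ℕ → S → ℝ≥0∞
  | 0, s => if d s then 1 else 0
  | n + 1, s => if d s then ∑ s', T s s' * stayProb d n s' else 0

theorem sum_pathProb_stay (d : S → Prop) (n : ℕ) (ρ : PMF S) :
    ∑ W : Fin (n + 1) → S, (if ∀ k, d (W k) then pathProb ρ T (n + 1) W else 0) =
      ∑ s, ρ s * stayProb T d n s := by
  induction n generalizing ρ with
  | zero => simp [sum_fin_succ_pi, pathProb_succ, stayProb]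
  | succ n ih =>
    have hcons (s : S) (W : Fin (n + 1) → S) :
        (∀ k, d ((Fin.cons s W : Fin (n + 2) → S) k)) ↔ d s ∧ ∀ k, d (W k) :=
      Fin.forall_fin_succ
    rw [sum_fin_succ_pi]
    refine sum_congr rfl fun s _ => ?_
    simp only [hcons, pathProb_cons, stayProb]
    by_cases hs : d s
    · simp [hs, ← ih, mul_sum]
    · simp [hs]

theorem stayProb_true (n : ℕ) (s : S) : stayProb T (fun _ => True) n s = 1 := by
  induction n generalizing s with
  | zero => simp [stayProb]
  | succ n ih => simp [stayProb, ih, PMF.sum_coe]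

theorem sum_pathProb (ρ : PMF S) : ∀ t, ∑ W : Fin t → S, pathProb ρ T t W = 1
  | 0 => by simp [pathProb]
  | n + 1 => by simpa [stayProb_true, PMF.sum_coe] using sum_pathProb_stay T (fun _ => True) n ρ

noncomputable def hitProb (a : S → Prop) (ρ : PMF S) (t : ℕ) : ℝ≥0∞ :=
  ∑ W : Fin t → S, if ∃ k, a (W k) then pathProb ρ T t W else 0

theorem hitProb_add_stay (a : S → Prop) (ρ : PMF S) (n : ℕ) :
    hitProb T a ρ (n + 1) + ∑ s, ρ s * stayProb T (¬ a ·) n s = 1 := by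
  rw [← sum_pathProb_stay, hitProb, ← sum_add_distrib, ← sum_pathProb T ρ (n + 1)]
  refine sum_congr rfl fun W _ => ?_
  by_cases h : ∃ k, a (W k) <;> simp [h, ← not_exists]

end MarkovChain

section Stationary

variable {S : Type*} [Fintype S] (T : S → PMF S)

theorem _root_.PMF.eq_of_sum_mul_eq_of_le (p : PMF S) {f : S → ℝ≥0∞} {M : ℝ≥0∞} (hM : M ≠ ⊤)
    (hf : ∀ s, f s ≤ M) (h : ∑ s, p s * f s = M) {s : S} (hs : p s ≠ 0) : f s = M := by
  have hsplit : ∑ s, p s * M = ∑ s, p s * f s + ∑ s, p s * (M - f s) := by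
    rw [← sum_add_distrib]
    exact sum_congr rfl fun s _ => by rw [← mul_add, add_tsub_cancel_of_le (hf s)]
  rw [← sum_mul, p.sum_coe, one_mul, h] at hsplit
  have hgap : ∑ s, p s * (M - f s) = 0 :=
    (ENNReal.add_right_inj hM).mp (by simpa using hsplit.symm)
  have hterm := sum_eq_zero_iff.mp hgap s (mem_univ s)
  exact le_antisymm (hf s) (tsub_eq_zero_iff_le.mp ((mul_eq_zero.mp hterm).resolve_left hs))

def IsAbsorbing (B : Set S) : Prop :=
  ∀ s ∈ B, ∀ s', T s s' ≠ 0 → s' ∈ B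

noncomputable def cesaroAvg (ρ : PMF S) (N : ℕ) (s : S) : ℝ≥0∞ :=
  (N + 1 : ℝ≥0∞)⁻¹ * ∑ k ∈ range (N + 1), ((·.bind T)^[k] ρ) s

theorem sum_cesaroAvg (ρ : PMF S) (N : ℕ) : ∑ s, cesaroAvg T ρ N s = 1 := by
  simp only [cesaroAvg, ← mul_sum]
  rw [sum_comm]
  simp [PMF.sum_coe, ENNReal.inv_mul_cancel]

theorem cesaroAvg_bind (ρ : PMF S) (N : ℕ) (s' : S) :
    ∑ s, cesaroAvg T ρ N s * T s s' + (N + 1 : ℝ≥0∞)⁻¹ * ρ s' =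
      cesaroAvg T ρ N s' + (N + 1 : ℝ≥0∞)⁻¹ * ((·.bind T)^[N + 1] ρ) s' := by
  have hstep (k : ℕ) : ∑ s, ((·.bind T)^[k] ρ) s * T s s' = ((·.bind T)^[k + 1] ρ) s' := by
    rw [Function.iterate_succ_apply', PMF.bind_apply_fintype]
  simp only [cesaroAvg, mul_assoc, ← mul_sum, ← mul_add, sum_mul]
  rw [sum_comm]
  simp only [hstep]
  exact congrArg _ ((sum_range_succ' (fun k => ((·.bind T)^[k] ρ) s') (N + 1)).symm.trans
    (sum_range_succ _ (N + 1)))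

theorem stationary_of_tendsto_cesaroAvg (ρ : PMF S) {ψ : ℕ → ℕ} (hψ : StrictMono ψ)
    {ν₀ : S → ℝ≥0∞} (hlim : Tendsto (cesaroAvg T ρ ∘ ψ) atTop (𝓝 ν₀)) :
    ∃ ν : PMF S, Stationary T ν ∧ ⇑ν = ν₀ := by
  have hcoord (s : S) : Tendsto (fun n => cesaroAvg T ρ (ψ n) s) atTop (𝓝 (ν₀ s)) :=
    tendsto_pi_nhds.mp hlim s
  have hweight : Tendsto (fun n => (ψ n + 1 : ℝ≥0∞)⁻¹) atTop (𝓝 0) := by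
    have := ENNReal.tendsto_inv_nat_nhds_zero.comp
      ((tendsto_add_atTop_nat 1).comp hψ.tendsto_atTop)
    simpa [Function.comp_def] using this
  have hvanish (f : ℕ → S → ℝ≥0∞) (hf : ∀ n s, f n s ≤ 1) (s : S) :
      Tendsto (fun n => (ψ n + 1 : ℝ≥0∞)⁻¹ * f n s) atTop (𝓝 0) :=
    tendsto_of_tendsto_of_tendsto_of_le_of_le tendsto_const_nhds hweight (fun _ => bot_le)
      fun n => mul_le_of_le_one_right' (hf n s)
  have hsum : ∑ s, ν₀ s = 1 :=
    tendsto_nhds_unique (tendsto_finsetSum _ fun s _ => hcoord s)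
      (by simp only [sum_cesaroAvg]; exact tendsto_const_nhds)
  refine ⟨PMF.ofFintype ν₀ hsum, fun s' => ?_, rfl⟩
  have hlhs := (tendsto_finsetSum univ fun s _ =>
      ENNReal.Tendsto.mul_const (hcoord s) (Or.inr (PMF.apply_ne_top (T s) s'))).add
    (hvanish (fun _ => ρ) (fun _ => PMF.coe_le_one ρ) s')
  have hrhs := (hcoord s').add
    (hvanish (fun n => (fun ν : PMF S => ν.bind T)^[ψ n + 1] ρ) (fun _ => PMF.coe_le_one _) s')
  simp only [cesaroAvg_bind] at hlhs
  simpa [tsum_fintype] using tendsto_nhds_unique hlhs hrhs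

theorem exists_stationary_of_isAbsorbing {B : Set S} (hB : IsAbsorbing T B) {s₀ : S}
    (hs₀ : s₀ ∈ B) : ∃ ν : PMF S, Stationary T ν ∧ ν.support ⊆ B := by
  have hiter (k : ℕ) : ((·.bind T)^[k] (PMF.pure s₀)).support ⊆ B := by
    induction k with
    | zero => simpa using hs₀
    | succ k ih =>
      rw [Function.iterate_succ_apply', PMF.support_bind]
      exact Set.iUnion₂_subset fun s hs s' hs' => hB s (ih hs) s' hs'
  have havg (N : ℕ) {s : S} (hs : s ∉ B) : cesaroAvg T (PMF.pure s₀) N s = 0 := by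
    simp only [cesaroAvg, mul_eq_zero, sum_eq_zero_iff, mem_range]
    exact Or.inr fun k _ => (PMF.apply_eq_zero_iff _ _).mpr fun h => hs (hiter k h)
  obtain ⟨ν₀, -, ψ, hψ, hlim⟩ :=
    isCompact_univ.tendsto_subseq fun N => Set.mem_univ (cesaroAvg T (PMF.pure s₀) N)
  obtain ⟨ν, hν, rfl⟩ := stationary_of_tendsto_cesaroAvg T _ hψ hlim
  refine ⟨ν, hν, fun s hs => by_contra fun hsB => hs ?_⟩
  exact tendsto_nhds_unique (tendsto_pi_nhds.mp hlim s)
    (by simp only [Function.comp_apply, havg _ hsB]; exact tendsto_const_nhds)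

end Stationary

section Hitting

variable {S : Type*} [Fintype S] (T : S → PMF S) (d : S → Prop)

theorem stayProb_le_one (n : ℕ) (s : S) : stayProb T d n s ≤ 1 := by
  induction n generalizing s with
  | zero => unfold stayProb; split_ifs <;> simp
  | succ n ih =>
    unfold stayProb
    split_ifs
    · calc ∑ s', T s s' * stayProb T d n s' ≤ ∑ s', T s s' :=
            sum_le_sum fun s' _ => mul_le_of_le_one_right' (ih s')
        _ = 1 := (T s).sum_coe
    · exact zero_le_one

theorem stayProb_antitone (s : S) : Antitone fun n => stayProb T d n s := by
  refine antitone_nat_of_succ_le fun n => ?_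
  induction n generalizing s with
  | zero =>
    unfold stayProb
    split_ifs
    · exact (sum_le_sum fun s' _ => mul_le_of_le_one_right' (stayProb_le_one T d 0 s')).trans
        (T s).sum_coe.le
    · exact le_rfl
  | succ n ih =>
    unfold stayProb
    split_ifs
    · exact sum_le_sum fun s' _ => mul_le_mul_right (ih s') _
    · exact le_rfl

noncomputable def stayForever (s : S) : ℝ≥0∞ :=
  ⨅ n, stayProb T d n s

theorem tendsto_stayProb (s : S) :
    Tendsto (fun n => stayProb T d n s) atTop (𝓝 (stayForever T d s)) :=
  tendsto_atTop_iInf (stayProb_antitone T d s)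

theorem stayForever_le_one (s : S) : stayForever T d s ≤ 1 :=
  (iInf_le _ 0).trans (stayProb_le_one T d 0 s)

theorem stayForever_eq (s : S) :
    stayForever T d s = if d s then ∑ s', T s s' * stayForever T d s' else 0 := by
  refine tendsto_nhds_unique ((tendsto_stayProb T d s).comp (tendsto_add_atTop_nat 1)) ?_
  simp only [Function.comp_def, stayProb]
  split_ifs
  · exact tendsto_finsetSum _ fun s' _ =>
      ENNReal.Tendsto.const_mul (tendsto_stayProb T d s') (Or.inr (PMF.apply_ne_top _ _))
  · exact tendsto_const_nhds

theorem stayForever_eq_zero (hst : ∀ ν : PMF S, Stationary T ν → ∃ s, ¬ d s ∧ ν s ≠ 0)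
    (s : S) : stayForever T d s = 0 := by
  by_contra hs
  obtain ⟨smax, -, hmax⟩ := exists_max_image univ (stayForever T d) ⟨s, mem_univ s⟩
  set M := stayForever T d smax
  have hM : M ≠ 0 := fun h => hs (le_antisymm (h ▸ hmax s (mem_univ s)) bot_le)
  have hd {s'} (hs' : stayForever T d s' = M) : d s' := by
    by_contra hd
    rw [stayForever_eq, if_neg hd] at hs'
    exact hM hs'.symm
  have hB : IsAbsorbing T {s' | stayForever T d s' = M} := by
    intro s' hs' s'' hT
    have hrec := stayForever_eq T d s'
    rw [if_pos (hd hs'), hs'] at hrec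
    exact (T s').eq_of_sum_mul_eq_of_le ((stayForever_le_one T d smax).trans_lt
      ENNReal.one_lt_top).ne (fun x => hmax x (mem_univ x)) hrec.symm hT
  obtain ⟨ν, hν, hsupp⟩ := exists_stationary_of_isAbsorbing T hB (s₀ := smax) rfl
  obtain ⟨s', hs', hνs'⟩ := hst ν hν
  exact hs' (hd (hsupp hνs'))

theorem tendsto_hitProb_one {a : S → Prop}
    (hst : ∀ ν : PMF S, Stationary T ν → ∃ s, a s ∧ ν s ≠ 0) (ρ : PMF S) :
    Tendsto (hitProb T a ρ) atTop (𝓝 1) := by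
  have hstay : Tendsto (fun n => ∑ s, ρ s * stayProb T (¬ a ·) n s) atTop (𝓝 0) := by
    have hzero (s : S) : stayForever T (¬ a ·) s = 0 :=
      stayForever_eq_zero T _ (fun ν hν => by simpa using hst ν hν) s
    simpa [hzero] using tendsto_finsetSum univ fun s _ =>
      ENNReal.Tendsto.const_mul (tendsto_stayProb T (¬ a ·) s) (Or.inr (ρ.apply_ne_top s))
  rw [← tendsto_add_atTop_iff_nat 1]
  have hhit (n : ℕ) : hitProb T a ρ (n + 1) = 1 - ∑ s, ρ s * stayProb T (¬ a ·) n s :=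
    ENNReal.eq_sub_of_add_eq (ne_top_of_le_ne_top ENNReal.one_ne_top
      (le_of_add_le_right (hitProb_add_stay T a ρ n).le)) (hitProb_add_stay T a ρ n)
  simpa [hhit] using ENNReal.Tendsto.sub tendsto_const_nhds hstay (Or.inl ENNReal.one_ne_top)

end Hitting

section StepModels

variable (satA : I → A → Prop) (satC : I → C → Prop) (μ : PMF (V → Bool))
  (T : (V → Bool) → PMF (V → Bool)) (𝕊 : Finset (A × (V → Option Bool))) (c : C) (t : ℕ)

theorem Pqt_le_one (q : PMF ((Fin t → I) × (Fin t → (V → Bool)))) : Pqt satC t q c ≤ 1 :=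
  (ENNReal.tsum_le_tsum fun _ => Set.indicator_le_self _ _ _).trans q.tsum_coe.le

/-- Pairing each path with a fixed choice of models of its worlds is a `t`-step model. -/
theorem exists_isStepModel [Fintype V]
    (hmod : ∀ W : V → Bool, ∃ i : I, IsOntModel satA (OW 𝕊 W) i) :
    ∃ q, IsStepModel satA μ T 𝕊 t q := by
  choose i₀ hi₀ using hmod
  let paths := PMF.ofFintype (pathProb μ T t) (sum_pathProb T μ t)
  refine ⟨paths.map fun W => (fun k => i₀ (W k), W), ?_, ?_, fun W => ?_⟩
  · rw [PMF.support_map]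
    exact (Set.toFinite _).image _
  · rintro _ hiw s
    obtain ⟨W, -, rfl⟩ := (PMF.support_map _ _).subset hiw
    exact hi₀ (W s)
  · exact (paths.tsum_map_prodMk_apply _ W).trans (PMF.ofFintype_apply _ W)

theorem hitProb_le_Pqt [Fintype V] {φ : (V → Bool) → Prop}
    (hent : ∀ W, φ W → Entails satA satC (OW 𝕊 W) c)
    {q : PMF ((Fin t → I) × (Fin t → (V → Bool)))} (hq : IsStepModel satA μ T 𝕊 t q) :
    hitProb T φ μ t ≤ Pqt satC t q c := by
  obtain ⟨-, hmodel, hmarg⟩ := hq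
  have hobs (iw : (Fin t → I) × (Fin t → (V → Bool))) :
      (if ∃ k, φ (iw.2 k) then q iw else 0) ≤
        {x : (Fin t → I) × (Fin t → (V → Bool)) | ∃ s, satC (x.1 s) c}.indicator q iw := by
    split_ifs with h
    · by_cases hiw : iw ∈ q.support
      · obtain ⟨k, hk⟩ := h
        have hobserved : ∃ s, satC (iw.1 s) c := ⟨k, hent _ hk _ (hmodel iw hiw k)⟩
        simp only [Set.indicator_apply, Set.mem_ofPred_eq, if_pos hobserved, le_refl]
      · simp [(PMF.apply_eq_zero_iff _ _).mpr hiw]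
    · exact bot_le
  calc hitProb T φ μ t
      = ∑' iw : (Fin t → I) × (Fin t → (V → Bool)), if ∃ k, φ (iw.2 k) then q iw else 0 := by
        rw [ENNReal.tsum_prod', ENNReal.tsum_comm, tsum_fintype, hitProb]
        refine sum_congr rfl fun W _ => ?_
        split_ifs <;> simp [hmarg]
    _ ≤ Pqt satC t q c := ENNReal.tsum_le_tsum hobs

end StepModels

/-- if `φ` is a context formula for `c` w.r.t. `𝕊` and every stationary
distribution of `T` gives positive probability to `{W | φ W}`, then
`lim_{t→∞} P_K(c[1:t]) = 1`. -/
theorem eventually_observing_consequence [Fintype V]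
    (satA : I → A → Prop) (satC : I → C → Prop)
    (μ : PMF (V → Bool)) (T : (V → Bool) → PMF (V → Bool))
    (𝕊 : Finset (A × (V → Option Bool))) (c : C)
    (φ : (V → Bool) → Prop)
    (hφ : ∀ W : V → Bool, Entails satA satC (OW 𝕊 W) c ↔ φ W)
    (hmod : ∀ W : V → Bool, ∃ i : I, IsOntModel satA (OW 𝕊 W) i)
    (hstat : ∀ ν : PMF (V → Bool), Stationary T ν →
      0 < ∑' W : V → Bool, {W : V → Bool | φ W}.indicator (⇑ν) W) :
    Filter.Tendsto (fun t : ℕ => PKbound satA satC μ T 𝕊 c t)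
      Filter.atTop (nhds 1) := by
  have hcharge (ν : PMF (V → Bool)) (hν : Stationary T ν) : ∃ W, φ W ∧ ν W ≠ 0 := by
    obtain ⟨W, hW⟩ := not_forall.mp (ENNReal.tsum_eq_zero.not.mp (hstat ν hν).ne')
    exact ⟨W, Set.indicator_apply_ne_zero.mp hW⟩
  refine tendsto_of_tendsto_of_tendsto_of_le_of_le (tendsto_hitProb_one T hcharge μ)
    tendsto_const_nhds (fun t => le_sInf ?_) (fun t => ?_)
  · rintro _ ⟨q, hq, rfl⟩
    exact hitProb_le_Pqt satA satC μ T 𝕊 c t (fun W => (hφ W).mpr) hq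
  · obtain ⟨q, hq⟩ := exists_isStepModel satA μ T 𝕊 t hmod
    refine (sInf_le ?_).trans (Pqt_le_one satC c t q)
    exact ⟨q, hq, rfl⟩

end DBL
end
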